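/- (Lemma 4.2, case (5,15).) For all nonnegative integers r and s, there exists a solution to HWP*(15; 5^r, 15^s) if and only if r + s = 14. -/

import Mathlib

/-!
Each of the `r + s` fixed-point-free factors of a solution of HWP*(15; 5^r, 15^s) uses 15 of
the `15 * 14` arcs of `K₁₅*`, so `r + s = 14`.

Conversely, start from a directed `C₅`-factorization of `K₁₅*` whose fourteen factors are
grouped in seven pairs. The arcs of each pair also split into two directed Hamilton cycles, and
those of one special pair also into a `C₅`-factor and a Hamilton cycle. Keeping `t ≤ 6` of the
six ordinary pairs and `c ≤ 2` of the `C₅`-factors of the special pair gives `r = c + 2 t`, and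
every `r ≤ 14` has this form.
-/

/-- A solution to the directed Hamilton–Waterloo problem HWP*(v; m^r, n^s):
a family of `r + s` permutations of `Fin v`, the first `r` of which are
fixed-point-free with all cycles of length `m` (i.e. every point has minimal
period `m`), the last `s` fixed-point-free with all cycles of length `n`,
such that for every ordered pair of distinct vertices `(x, y)` there is exactly
one index `i` with `σ i x = y`. -/
def HWPStarSolution (v m n r s : ℕ) : Prop :=
  ∃ σ : Fin (r + s) → Equiv.Perm (Fin v),
    (∀ i : Fin (r + s), (i : ℕ) < r → ∀ x : Fin v, Function.minimalPeriod ⇑(σ i) x = m) ∧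
    (∀ i : Fin (r + s), r ≤ (i : ℕ) → ∀ x : Fin v, Function.minimalPeriod ⇑(σ i) x = n) ∧
    (∀ x y : Fin v, x ≠ y → ∃! i : Fin (r + s), σ i x = y)

open Equiv Finset Function

theorem Function.minimalPeriod_eq_of_iterate {α : Type*} {f : α → α} {x : α} {m : ℕ}
    (hm : 0 < m) (h : f^[m] x = x ∧ ∀ k < m, 0 < k → f^[k] x ≠ x) : minimalPeriod f x = m := by
  have hper : IsPeriodicPt f m x := h.1
  refine le_antisymm (hper.minimalPeriod_le hm) (not_lt.mp fun hlt => ?_)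
  exact h.2 _ hlt (hper.minimalPeriod_pos hm) (isPeriodicPt_minimalPeriod f x)

section OutNeighbors

variable {V ι : Type*} [Fintype ι]

def outNeighbors (σ : ι → Perm V) (x : V) : Multiset V := univ.val.map fun i => σ i x

theorem outNeighbors_eq_erase_iff [Fintype V] [DecidableEq V] (σ : ι → Perm V) (x : V) :
    outNeighbors σ x = (univ.erase x).val ↔
      (∀ i, σ i x ≠ x) ∧ ∀ y, x ≠ y → ∃! i, σ i x = y := by
  have hcomm : ∀ y, #{i | y = σ i x} = #{i | σ i x = y} := fun y =>
    congrArg card (filter_congr fun _ _ => eq_comm)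
  simp only [outNeighbors, Multiset.ext, Multiset.count_map,
    Multiset.count_eq_of_nodup (univ.erase x).nodup, Finset.mem_val, mem_erase, mem_univ, and_true,
    ← Finset.filter_val, Finset.card_val, hcomm]
  constructor
  · intro h
    refine ⟨fun i hi => ?_, fun y hy => (Fintype.existsUnique_iff_card_one _).mpr ?_⟩
    · have hx := h x
      rw [if_neg (not_not.mpr rfl), card_filter_eq_zero_iff] at hx
      exact hx i (mem_univ i) hi
    · rw [h y, if_pos (Ne.symm hy)]
  · rintro ⟨hfix, huniq⟩ y
    by_cases hy : y = x
    · subst hy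
      rw [if_neg (not_not.mpr rfl), card_filter_eq_zero_iff]
      exact fun i _ => hfix i
    · rw [if_pos hy, ← Fintype.existsUnique_iff_card_one]
      exact huniq y (Ne.symm hy)

end OutNeighbors

theorem HWPStarSolution.add_eq_sub_one {v m n r s : ℕ} (h : HWPStarSolution v m n r s)
    (hm : m ≠ 1) (hn : n ≠ 1) (hv : 0 < v) : r + s = v - 1 := by
  obtain ⟨σ, hσm, hσn, huniq⟩ := h
  let x : Fin v := ⟨0, hv⟩
  have hfix : ∀ i, σ i x ≠ x := fun i hi => by
    have h1 : minimalPeriod (σ i) x = 1 := minimalPeriod_eq_one_iff_isFixedPt.mpr hi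
    rcases lt_or_ge (i : ℕ) r with hi' | hi'
    · exact hm (hσm i hi' x ▸ h1)
    · exact hn (hσn i hi' x ▸ h1)
  have := congrArg Multiset.card ((outNeighbors_eq_erase_iff σ x).mpr ⟨hfix, huniq x⟩)
  simpa [outNeighbors, card_erase_of_mem] using this

section Factorization

variable {V : Type*} {m n : ℕ}

/-- `D` is a multidigraph on `V`, given by the multiset `D x` of out-neighbours of each vertex;
it is the arc-disjoint union of `r` directed `Cₘ`-factors and `s` directed `Cₙ`-factors. -/
def HasCycleFactorization (m n : ℕ) (D : V → Multiset V) (r s : ℕ) : Prop :=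
  ∃ F G : Multiset (Perm V), Multiset.card F = r ∧ Multiset.card G = s ∧
    (∀ σ ∈ F, ∀ x, minimalPeriod σ x = m) ∧ (∀ σ ∈ G, ∀ x, minimalPeriod σ x = n) ∧
    ∀ x, (F + G).map (· x) = D x

theorem hasCycleFactorization_zero : HasCycleFactorization m n (0 : V → Multiset V) 0 0 :=
  ⟨0, 0, rfl, rfl, by simp, by simp, fun _ => rfl⟩

theorem HasCycleFactorization.add {D₁ D₂ : V → Multiset V} {r₁ s₁ r₂ s₂ : ℕ}
    (h₁ : HasCycleFactorization m n D₁ r₁ s₁) (h₂ : HasCycleFactorization m n D₂ r₂ s₂) :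
    HasCycleFactorization m n (D₁ + D₂) (r₁ + r₂) (s₁ + s₂) := by
  obtain ⟨F₁, G₁, rfl, rfl, hm₁, hn₁, hD₁⟩ := h₁
  obtain ⟨F₂, G₂, rfl, rfl, hm₂, hn₂, hD₂⟩ := h₂
  refine ⟨F₁ + F₂, G₁ + G₂, Multiset.card_add _ _, Multiset.card_add _ _, ?_, ?_, fun x => ?_⟩
  · simp only [Multiset.mem_add]
    rintro σ (hσ | hσ)
    exacts [hm₁ σ hσ, hm₂ σ hσ]
  · simp only [Multiset.mem_add]
    rintro σ (hσ | hσ)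
    exacts [hn₁ σ hσ, hn₂ σ hσ]
  · rw [Pi.add_apply, ← hD₁, ← hD₂]
    simp only [Multiset.map_add]
    abel

theorem hasCycleFactorization_sum {b : ℕ} :
    ∀ {k : ℕ} (D : Fin k → V → Multiset V), (∀ j, HasCycleFactorization m n (D j) b 0) →
      (∀ j, HasCycleFactorization m n (D j) 0 b) → ∀ t u, t + u = k →
      HasCycleFactorization m n (∑ j, D j) (b * t) (b * u)
  | 0, D, _, _, t, u, htu => by
    obtain ⟨rfl, rfl⟩ : t = 0 ∧ u = 0 := by omega
    simpa using hasCycleFactorization_zero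
  | k + 1, D, hm, hn, t, u, htu => by
    rw [Fin.sum_univ_castSucc]
    have ih := hasCycleFactorization_sum (fun j => D j.castSucc) (fun j => hm _) (fun j => hn _)
    rcases u with _ | u
    · have := (ih k 0 (by simp)).add (hm (Fin.last k))
      obtain rfl : t = k + 1 := by omega
      rwa [add_zero, ← mul_add_one] at this
    · have := (ih t u (by omega)).add (hn (Fin.last k))
      rwa [add_zero, ← mul_add_one] at this

theorem hasCycleFactorization_of_fin {k c : ℕ} (σ : Fin k → Perm V) (hc : c ≤ k)
    (hm : ∀ i : Fin k, (i : ℕ) < c → ∀ x, minimalPeriod (σ i) x = m)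
    (hn : ∀ i : Fin k, c ≤ (i : ℕ) → ∀ x, minimalPeriod (σ i) x = n) :
    HasCycleFactorization m n (outNeighbors σ) c (k - c) := by
  refine ⟨(univ.filter fun i : Fin k => (i : ℕ) < c).val.map σ,
    (univ.filter fun i : Fin k => ¬(i : ℕ) < c).val.map σ, ?_, ?_, ?_, ?_, fun x => ?_⟩
  · rw [Multiset.card_map, card_val, Fin.card_filter_val_lt, min_eq_right hc]
  · have := card_filter_add_card_filter_not (s := univ) fun i : Fin k => (i : ℕ) < c
    rw [Fin.card_filter_val_lt, min_eq_right hc, card_univ, Fintype.card_fin] at this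
    rw [Multiset.card_map, card_val]
    omega
  · simp only [Multiset.mem_map, Finset.mem_val, mem_filter, mem_univ, true_and]
    rintro _ ⟨i, hi, rfl⟩
    exact hm i hi
  · simp only [Multiset.mem_map, Finset.mem_val, mem_filter, mem_univ, true_and]
    rintro _ ⟨i, hi, rfl⟩
    exact hn i (not_lt.mp hi)
  · rw [← Multiset.map_add, Multiset.map_map, filter_val, filter_val, Multiset.filter_add_not]
    rfl

theorem hwpStarSolution_of_hasCycleFactorization {v m n r s : ℕ}
    (h : HasCycleFactorization m n (fun x : Fin v => (univ.erase x).val) r s) :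
    HWPStarSolution v m n r s := by
  obtain ⟨F, G, hF, hG, hm, hn, hD⟩ := h
  let σ : Fin (r + s) → Perm (Fin v) :=
    Fin.append (fun i => F.toList.get (i.cast (by simp [hF])))
      (fun j => G.toList.get (j.cast (by simp [hG])))
  have hσ : List.ofFn σ = F.toList ++ G.toList := by
    rw [List.ofFn_fin_append]
    congr 1 <;> exact List.ext_getElem (by simp [*]) fun _ _ _ => by simp
  refine ⟨σ, fun i hi x => ?_, fun i hi x => ?_,
    fun x => ((outNeighbors_eq_erase_iff σ x).mp ?_).2⟩
  · obtain ⟨i, rfl⟩ : ∃ i' : Fin r, Fin.castAdd s i' = i := ⟨⟨i, hi⟩, rfl⟩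
    simp only [σ, Fin.append_left]
    exact hm _ (Multiset.mem_toList.mp (List.get_mem _ _)) x
  · obtain ⟨j, rfl⟩ : ∃ j : Fin s, Fin.natAdd r j = i :=
      ⟨⟨i - r, by omega⟩, Fin.ext (by simp; omega)⟩
    simp only [σ, Fin.append_right]
    exact hn _ (Multiset.mem_toList.mp (List.get_mem _ _)) x
  · rw [outNeighbors, Fin.univ_val_map, show List.ofFn (σ · x) = (List.ofFn σ).map (· x) by
      rw [List.map_ofFn]; rfl, hσ, ← Multiset.map_coe, ← Multiset.coe_add,
      Multiset.coe_toList, Multiset.coe_toList]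
    exact hD x

end Factorization

namespace HWPStar15

def ofCycles (cs : List (List (Fin 15))) : Perm (Fin 15) := (cs.map List.formPerm).prod

def pentagonPair : Fin 6 → Fin 2 → Perm (Fin 15) := ![
  ![ofCycles [[0, 10, 5, 4, 12], [1, 14, 8, 3, 9], [2, 7, 11, 13, 6]],
    ofCycles [[0, 7, 6, 14, 4], [1, 5, 12, 13, 10], [2, 9, 3, 11, 8]]],
  ![ofCycles [[0, 5, 14, 11, 9], [1, 3, 12, 10, 13], [2, 8, 6, 4, 7]],
    ofCycles [[0, 4, 10, 9, 7], [1, 6, 5, 2, 11], [3, 14, 13, 8, 12]]],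
  ![ofCycles [[0, 8, 10, 3, 2], [1, 4, 6, 13, 12], [5, 9, 11, 14, 7]],
    ofCycles [[0, 11, 2, 1, 8], [3, 13, 14, 9, 6], [4, 5, 10, 12, 7]]],
  ![ofCycles [[0, 14, 12, 6, 10], [1, 11, 7, 8, 5], [2, 3, 4, 9, 13]],
    ofCycles [[0, 13, 4, 11, 6], [1, 9, 2, 12, 8], [3, 10, 14, 5, 7]]],
  ![ofCycles [[0, 12, 2, 13, 5], [1, 10, 11, 3, 7], [4, 14, 6, 8, 9]],
    ofCycles [[0, 9, 12, 14, 1], [2, 10, 8, 11, 4], [3, 5, 6, 7, 13]]],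
  ![ofCycles [[0, 6, 1, 12, 11], [2, 5, 13, 9, 14], [3, 8, 7, 10, 4]],
    ofCycles [[0, 3, 1, 7, 14], [2, 6, 12, 9, 10], [4, 13, 11, 5, 8]]]]

def hamiltonPair : Fin 6 → Fin 2 → Perm (Fin 15) := ![
  ![ofCycles [[0, 10, 5, 12, 13, 6, 2, 7, 11, 8, 3, 9, 1, 14, 4]],
    ofCycles [[0, 7, 6, 14, 8, 2, 9, 3, 11, 13, 10, 1, 5, 4, 12]]],
  ![ofCycles [[0, 5, 14, 13, 8, 6, 4, 7, 2, 11, 1, 3, 12, 10, 9]],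
    ofCycles [[0, 4, 10, 13, 1, 6, 5, 2, 8, 12, 3, 14, 11, 9, 7]]],
  ![ofCycles [[0, 8, 10, 12, 1, 4, 6, 3, 13, 14, 7, 5, 9, 11, 2]],
    ofCycles [[0, 11, 14, 9, 6, 13, 12, 7, 4, 5, 10, 3, 2, 1, 8]]],
  ![ofCycles [[0, 14, 5, 7, 3, 4, 9, 13, 2, 12, 8, 1, 11, 6, 10]],
    ofCycles [[0, 13, 4, 11, 7, 8, 5, 1, 9, 2, 3, 10, 14, 12, 6]]],
  ![ofCycles [[0, 12, 2, 10, 11, 3, 7, 13, 5, 6, 8, 9, 4, 14, 1]],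
    ofCycles [[0, 9, 12, 14, 6, 7, 1, 10, 8, 11, 4, 2, 13, 3, 5]]],
  ![ofCycles [[0, 6, 1, 12, 9, 10, 4, 3, 8, 7, 14, 2, 5, 13, 11]],
    ofCycles [[0, 3, 1, 7, 10, 2, 6, 12, 11, 5, 8, 4, 13, 9, 14]]]]

/-- `specialPair c` consists of `c` `C₅`-factors followed by `2 - c` Hamilton cycles. -/
def specialPair : Fin 3 → Fin 2 → Perm (Fin 15) := ![
  ![ofCycles [[0, 1, 2, 14, 3, 6, 9, 5, 11, 10, 7, 12, 4, 8, 13]],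
    ofCycles [[0, 2, 4, 1, 13, 7, 9, 8, 14, 10, 6, 11, 12, 5, 3]]],
  ![ofCycles [[0, 2, 4, 1, 13], [3, 6, 9, 8, 14], [5, 11, 10, 7, 12]],
    ofCycles [[0, 1, 2, 14, 10, 6, 11, 12, 4, 8, 13, 7, 9, 5, 3]]],
  ![ofCycles [[0, 1, 2, 14, 3], [4, 8, 13, 7, 12], [5, 11, 10, 6, 9]],
    ofCycles [[0, 2, 4, 1, 13], [3, 6, 11, 12, 5], [7, 9, 8, 14, 10]]]]

set_option maxRecDepth 10000

theorem minimalPeriod_pentagonPair (j : Fin 6) (i : Fin 2) (x : Fin 15) :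
    minimalPeriod (pentagonPair j i) x = 5 := by
  refine minimalPeriod_eq_of_iterate (by norm_num) ?_
  revert j i x
  decide

theorem minimalPeriod_hamiltonPair (j : Fin 6) (i : Fin 2) (x : Fin 15) :
    minimalPeriod (hamiltonPair j i) x = 15 := by
  refine minimalPeriod_eq_of_iterate (by norm_num) ?_
  revert j i x
  decide

theorem minimalPeriod_specialPair (c : Fin 3) (i : Fin 2) (x : Fin 15) :
    minimalPeriod (specialPair c i) x = if (i : ℕ) < c then 5 else 15 := by
  split_ifs <;> refine minimalPeriod_eq_of_iterate (by norm_num) ?_ <;> revert c i x <;> decide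

theorem outNeighbors_hamiltonPair (j : Fin 6) :
    outNeighbors (hamiltonPair j) = outNeighbors (pentagonPair j) := by
  funext x
  revert j x
  decide

theorem outNeighbors_specialPair (c : Fin 3) :
    outNeighbors (specialPair c) = outNeighbors (specialPair 2) := by
  funext x
  revert c x
  decide

theorem outNeighbors_specialPair_add_sum_pentagonPair :
    outNeighbors (specialPair 2) + ∑ j, outNeighbors (pentagonPair j) =
      fun x => (univ.erase x).val := by
  funext x
  revert x
  decide

theorem hasCycleFactorization_specialPair {c : ℕ} (hc : c ≤ 2) :
    HasCycleFactorization 5 15 (outNeighbors (specialPair 2)) c (2 - c) := by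
  rw [← outNeighbors_specialPair ⟨c, by omega⟩]
  refine hasCycleFactorization_of_fin _ hc (fun i hi x => ?_) (fun i hi x => ?_) <;>
    simp [minimalPeriod_specialPair, hi]

theorem hasCycleFactorization_sum_pentagonPair {t u : ℕ} (htu : t + u = 6) :
    HasCycleFactorization 5 15 (∑ j, outNeighbors (pentagonPair j)) (2 * t) (2 * u) := by
  refine hasCycleFactorization_sum _ (fun j => ?_) (fun j => ?_) t u htu
  · exact hasCycleFactorization_of_fin _ le_rfl (fun i _ => minimalPeriod_pentagonPair j i)
      (fun i hi => absurd i.2 (by omega))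
  · rw [← outNeighbors_hamiltonPair]
    exact hasCycleFactorization_of_fin (c := 0) _ (Nat.zero_le _)
      (fun i hi => absurd hi (Nat.not_lt_zero _)) (fun i _ => minimalPeriod_hamiltonPair j i)

end HWPStar15

/-- HWP*(15; 5^r, 15^s) has a solution if and only if r + s = 14. -/
theorem hwpStar_15_5_15 (r s : ℕ) :
    HWPStarSolution 15 5 15 r s ↔ r + s = 14 := by
  refine ⟨fun h => h.add_eq_sub_one (by norm_num) (by norm_num) (by norm_num), fun h => ?_⟩
  obtain ⟨c, t, hc, ht, rfl⟩ : ∃ c t, c ≤ 2 ∧ t ≤ 6 ∧ r = c + 2 * t :=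
    ⟨r - 2 * min (r / 2) 6, min (r / 2) 6, by omega, by omega, by omega⟩
  have key := (HWPStar15.hasCycleFactorization_specialPair hc).add
    (HWPStar15.hasCycleFactorization_sum_pentagonPair (t := t) (u := 6 - t) (by omega))
  rw [HWPStar15.outNeighbors_specialPair_add_sum_pentagonPair,
    show 2 - c + 2 * (6 - t) = s by omega] at key
  exact hwpStarSolution_of_hasCycleFactorization key
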